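/- arXiv:2011.07630 — 3 statements merged into one kernel-verified Lean document; each statement's English description precedes it below -/
import Mathlib

section
/- Let Σ = {0,1} and Γ = {a,b}, and let L ⊆ (Σ×Γ)^ω be the bi-language L = {0^ω ⊕ a^ω} ∪ {v ⊕ b^ω : v ∈ Σ^ω, v ≠ 0^ω}. Then L is Σ-exhaustive, yet no concrete tree is contained in L (concTrees(L) = ∅). In particular, there exists a Σ-exhaustive bi-language L with concTrees(L) = ∅. -/
/-- The prefix of length `n` of an infinite word `w`. -/
def ipre {α : Type*} (w : ℕ → α) (n : ℕ) : List α :=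
  List.ofFn (fun i : Fin n => w i)

/-- The pairing `v ⊕ w` of two infinite words. -/
def ipair {α β : Type*} (v : ℕ → α) (w : ℕ → β) : ℕ → α × β :=
  fun n => (v n, w n)

/-- The set of finite prefixes of members of a set of infinite words. -/
def prefSet {α : Type*} (U : Set (ℕ → α)) : Set (List α) :=
  {x | ∃ w ∈ U, x = ipre w x.length}

/-- A concrete tree `τ : Σ* → Γ` is contained in the bi-language `L`. -/
def ConcContained {Sig Gam : Type*} (L : Set (ℕ → Sig × Gam)) (τ : List Sig → Gam) : Prop :=
  ∀ v : ℕ → Sig, ipair v (fun n => τ (ipre v (n + 1))) ∈ L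

/-- A symbolic tree `T : Σ* → 2^Γ` is contained in the bi-language `L`. -/
def SymbContained {Sig Gam : Type*} (L : Set (ℕ → Sig × Gam)) (T : List Sig → Set Gam) : Prop :=
  ∀ (v : ℕ → Sig) (w : ℕ → Gam), (∀ n, w n ∈ T (ipre v (n + 1))) → ipair v w ∈ L

/-- A symbolic transducer over `(Sig, Gam)` with state set `Q`. -/
structure SymTrans (Sig Gam Q : Type*) where
  init : Q
  delta : Q → Sig → Set Q
  delta_ne : ∀ q σ, (delta q σ).Nonempty
  eta : Q → Set Gam
  eta_ne : ∀ q, (eta q).Nonempty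

/-- `GenFrom A q w`: the finite bi-word `w` is generated by `A` starting at state `q`. -/
inductive GenFrom {Sig Gam Q : Type*} (A : SymTrans Sig Gam Q) : Q → List (Sig × Gam) → Prop
  | nil (q : Q) : GenFrom A q []
  | cons {q q' : Q} {σ : Sig} {γ : Gam} {w : List (Sig × Gam)} :
      q' ∈ A.delta q σ → γ ∈ A.eta q' → GenFrom A q' w → GenFrom A q ((σ, γ) :: w)

/-- `⟦A⟧_*`, the set of finite bi-words generated by `A`. -/
def genFin {Sig Gam Q : Type*} (A : SymTrans Sig Gam Q) : Set (List (Sig × Gam)) :=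
  {w | GenFrom A A.init w}

/-- `⟦A⟧_ω`, the set of infinite bi-words generated by `A`. -/
def genInf {Sig Gam Q : Type*} (A : SymTrans Sig Gam Q) : Set (ℕ → Sig × Gam) :=
  {w | ∃ run : ℕ → Q, run 0 = A.init ∧
        ∀ n, run (n + 1) ∈ A.delta (run n) (w n).1 ∧ (w n).2 ∈ A.eta (run (n + 1))}

/-- A safety language of infinite words. -/
def IsSafety {α : Type*} (U : Set (ℕ → α)) : Prop :=
  ∃ S : Set (List α), U = {w | ∀ n, ipre w n ∈ S}

/-- A concrete (deterministic, single-output) transducer. -/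
structure ConTrans (Sig Gam Q : Type*) where
  init : Q
  delta : Q → Sig → Q
  eta : Q → Gam

/-- Iterated transition function `δ*`. -/
def dstar {Sig Q : Type*} (d : Q → Sig → Q) (q : Q) (v : List Sig) : Q :=
  v.foldl d q

/-- `⟦C⟧_ω`, the set of infinite bi-words generated by a concrete transducer `C`. -/
def genInfC {Sig Gam Q : Type*} (C : ConTrans Sig Gam Q) : Set (ℕ → Sig × Gam) :=
  {w | ∀ n, (w n).2 = C.eta (dstar C.delta C.init (ipre (fun k => (w k).1) (n + 1)))}

/-- The right-congruence `v₁ ~_U v₂` on input words induced by a bi-language `U`. -/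
def EquivU {Sig Gam : Type*} (U : Set (ℕ → Sig × Gam)) (v1 v2 : List Sig) : Prop :=
  ∀ (x : List (Sig × Gam)) (u1 u2 : List Gam),
    u1.length = v1.length → u2.length = v2.length →
    v1.zip u1 ∈ prefSet U → v2.zip u2 ∈ prefSet U →
    (v1.zip u1 ++ x ∈ prefSet U ↔ v2.zip u2 ++ x ∈ prefSet U)

/-- A sequence is ultimately periodic. -/
def UltPeriodic {α : Type*} (f : ℕ → α) : Prop :=
  ∃ N p : ℕ, 0 < p ∧ ∀ n ≥ N, f (n + p) = f n

/-- The bi-language L = {0^ω ⊕ a^ω} ∪ {v ⊕ b^ω : v ≠ 0^ω}, with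
Σ = Bool (0 = false, 1 = true) and Γ = Bool (a = false, b = true). -/
def L0 : Set (ℕ → Bool × Bool) :=
  {bw | (∀ n, bw n = (false, false)) ∨
        ((∃ n, (bw n).1 = true) ∧ ∀ n, (bw n).2 = true)}

theorem exists_ipair_mem_L0 (v : ℕ → Bool) : ∃ w : ℕ → Bool, ipair v w ∈ L0 := by
  by_cases h : ∃ n, v n = true
  · exact ⟨fun _ => true, Or.inr ⟨h, fun _ => rfl⟩⟩
  · simp only [not_exists, Bool.not_eq_true] at h
    exact ⟨fun _ => false, Or.inl fun n => by simp [ipair, h n]⟩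

/-- Causality obstruction: on the input `0^ω` a tree must answer `a` after reading `0`, but on the
input `0 1 0 0 …`, which starts with the same letter, it must answer `b` at that point. -/
theorem not_concContained_L0 (τ : List Bool → Bool) : ¬ ConcContained L0 τ := by
  intro hτ
  have hpre : ∀ v : ℕ → Bool, ipre v 1 = [v 0] := fun _ => rfl
  have hzero : τ [false] = false := by
    rcases hτ fun _ => false with h | ⟨⟨n, hn⟩, -⟩
    · simpa [ipair, hpre] using h 0
    · simp [ipair] at hn
  rcases hτ fun n => decide (n = 1) with h | h
  · simpa [ipair] using h 1
  · simpa [ipair, hpre, hzero] using h.2 0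

theorem stmt_0 :
    (∀ v : ℕ → Bool, ∃ w : ℕ → Bool, ipair v w ∈ L0) ∧
    (¬ ∃ τ : List Bool → Bool, ConcContained L0 τ) ∧
    (∃ L : Set (ℕ → Bool × Bool),
      (∀ v : ℕ → Bool, ∃ w : ℕ → Bool, ipair v w ∈ L) ∧
      ¬ ∃ τ : List Bool → Bool, ConcContained L τ) := by
  have hnone : ¬ ∃ τ, ConcContained L0 τ := not_exists.mpr not_concContained_L0
  exact ⟨exists_ipair_mem_L0, hnone, L0, exists_ipair_mem_L0, hnone⟩
end

section
/- Let U ⊆ (Σ×Γ)^ω be a safety language and let A be a symbolic transducer over (Σ,Γ) with a finite state set such that ⟦A⟧_* ⊆ pref(U). Then ⟦A⟧_ω ⊆ U. In particular, if a symbolic conjecture query on A returns true (i.e., all finite bi-words generated by A are prefixes of words of U), then any concretization C of A realizes U, i.e., ⟦C⟧_ω ⊆ U. -/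
/- A run of `A` on an infinite bi-word generates each of its finite prefixes, and a safety
language contains every infinite word all of whose prefixes extend to members of it; together
these give `⟦A⟧_ω ⊆ U`. A concretization only removes runs, so it inherits the inclusion. -/

section SafetyLanguage

variable {α : Type*} {U : Set (ℕ → α)}

theorem IsSafety.mem_of_forall_ipre_mem_prefSet (hU : IsSafety U) {w : ℕ → α}
    (hw : ∀ n, ipre w n ∈ prefSet U) : w ∈ U := by
  obtain ⟨S, rfl⟩ := hU
  intro n
  obtain ⟨w', hw'S, hpre⟩ := hw n
  have hlen : (ipre w n).length = n := List.length_ofFn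
  rw [hpre, hlen]
  exact hw'S n

end SafetyLanguage

namespace SymTrans

variable {Sig Gam Q : Type*}

theorem genFrom_ipre_shift (A : SymTrans Sig Gam Q) {w : ℕ → Sig × Gam} {run : ℕ → Q}
    (hrun : ∀ n, run (n + 1) ∈ A.delta (run n) (w n).1 ∧ (w n).2 ∈ A.eta (run (n + 1)))
    (n m : ℕ) : GenFrom A (run m) (ipre (fun k => w (m + k)) n) := by
  induction n generalizing m with
  | zero => exact GenFrom.nil _
  | succ n ih =>
    have hshift : ipre (fun k => w (m + k)) (n + 1) = w m :: ipre (fun k => w (m + 1 + k)) n := by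
      simp only [ipre, List.ofFn_succ, Fin.val_zero, Fin.val_succ, Nat.add_zero]
      congr 2
      funext i
      rw [Nat.add_assoc, Nat.add_comm 1]
    rw [hshift]
    exact GenFrom.cons (hrun m).1 (hrun m).2 (ih (m + 1))

theorem ipre_mem_genFin_of_mem_genInf (A : SymTrans Sig Gam Q) {w : ℕ → Sig × Gam}
    (hw : w ∈ genInf A) (n : ℕ) : ipre w n ∈ genFin A := by
  obtain ⟨run, hrun0, hrun⟩ := hw
  show GenFrom A A.init (ipre w n)
  simpa only [Nat.zero_add, hrun0] using A.genFrom_ipre_shift hrun n 0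

theorem genInf_subset_of_genFin_subset_prefSet (A : SymTrans Sig Gam Q)
    {U : Set (ℕ → Sig × Gam)} (hU : IsSafety U) (h : genFin A ⊆ prefSet U) :
    genInf A ⊆ U := fun _ hw =>
  hU.mem_of_forall_ipre_mem_prefSet fun n => h (A.ipre_mem_genFin_of_mem_genInf hw n)

theorem genInf_mono {A C : SymTrans Sig Gam Q} (hinit : C.init = A.init)
    (hdelta : ∀ q σ, C.delta q σ ⊆ A.delta q σ) (heta : ∀ q, C.eta q ⊆ A.eta q) :
    genInf C ⊆ genInf A := by
  rintro w ⟨run, hrun0, hrun⟩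
  exact ⟨run, hrun0.trans hinit, fun n => ⟨hdelta _ _ (hrun n).1, heta _ (hrun n).2⟩⟩

end SymTrans

theorem stmt_7_general {Sig Gam Q : Type}
    (U : Set (ℕ → Sig × Gam)) (hU : IsSafety U)
    (A : SymTrans Sig Gam Q) (h : genFin A ⊆ prefSet U) :
    genInf A ⊆ U ∧
    ∀ C : SymTrans Sig Gam Q, C.init = A.init →
      (∀ q σ, C.delta q σ ⊆ A.delta q σ) → (∀ q, C.eta q ⊆ A.eta q) →
      (∀ q σ, ∃ q', C.delta q σ = {q'}) → (∀ q, ∃ γ, C.eta q = {γ}) →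
      genInf C ⊆ U := by
  have hA : genInf A ⊆ U := A.genInf_subset_of_genFin_subset_prefSet hU h
  exact ⟨hA, fun _ hinit hdelta heta _ _ => (SymTrans.genInf_mono hinit hdelta heta).trans hA⟩

theorem stmt_7 {Sig Gam Q : Type} [Fintype Sig] [Nonempty Sig] [Fintype Gam] [Nonempty Gam]
    [Fintype Q] [Nonempty Q]
    (U : Set (ℕ → Sig × Gam)) (hU : IsSafety U)
    (A : SymTrans Sig Gam Q) (h : genFin A ⊆ prefSet U) :
    genInf A ⊆ U ∧
    ∀ C : SymTrans Sig Gam Q, C.init = A.init →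
      (∀ q σ, C.delta q σ ⊆ A.delta q σ) → (∀ q, C.eta q ⊆ A.eta q) →
      (∀ q σ, ∃ q', C.delta q σ = {q'}) → (∀ q, ∃ γ, C.eta q = {γ}) →
      genInf C ⊆ U :=
  stmt_7_general U hU A h
end

section
/- Let C = (Q, q_ι, δ, η) be a concrete transducer over (Σ,Γ) with |Q| = n states and let U = ⟦C⟧_ω. Then every set of finite words in Σ^* that are pairwise inequivalent under ~_U has cardinality at most n. (Equivalently: if rank(U), the number of ~_U-equivalence classes, equals m, then C has at least m states.) -/
/-!
Reading an input word `v` drives a concrete transducer into the state `δ*(q_ι, v)`, and which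
continuations of a generated prefix `v ⊕ u` are again generated depends only on that state. Hence
two input words leading to the same state are `~_U`-equivalent, so `v ↦ δ*(q_ι, v)` is injective on
a set of pairwise inequivalent words.
-/

section ipre

variable {α : Type*}

@[simp] lemma length_ipre (w : ℕ → α) (n : ℕ) : (ipre w n).length = n := by
  simp [ipre]

@[simp] lemma getElem_ipre (w : ℕ → α) (n i : ℕ) (h : i < (ipre w n).length) :
    (ipre w n)[i] = w i := by
  simp [ipre]

lemma map_ipre {β : Type*} (f : α → β) (w : ℕ → α) (n : ℕ) : (ipre w n).map f = ipre (f ∘ w) n :=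
  List.map_ofFn ..

lemma eq_ipre_length_iff (y : List α) (w : ℕ → α) :
    y = ipre w y.length ↔ ∀ i (h : i < y.length), y[i] = w i := by
  refine ⟨fun hy i hi => ?_, fun hy => List.ext_getElem (by simp) fun i h _ => by simp [hy i h]⟩
  rw [List.getElem_of_eq hy hi, getElem_ipre]

lemma take_ipre (w : ℕ → α) {k n : ℕ} (hk : k ≤ n) : (ipre w n).take k = ipre w k :=
  List.ext_getElem (by simpa using hk) fun i _ _ => by simp

lemma ipre_getD (l : List α) (d : α) {k : ℕ} (hk : k ≤ l.length) :
    ipre (l.getD · d) k = l.take k :=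
  List.ext_getElem (by simpa using hk) fun i h _ => by
    simp only [length_ipre] at h; simp [show i < l.length by omega]

end ipre

namespace ConTrans

variable {Sig Gam Q : Type} (C : ConTrans Sig Gam Q)

def GenFrom : Q → List (Sig × Gam) → Prop
  | _, [] => True
  | q, p :: y => p.2 = C.eta (C.delta q p.1) ∧ GenFrom (C.delta q p.1) y

lemma genFrom_append (y x : List (Sig × Gam)) (q : Q) :
    C.GenFrom q (y ++ x) ↔ C.GenFrom q y ∧ C.GenFrom (dstar C.delta q (y.map Prod.fst)) x := by
  induction y generalizing q with
  | nil => simp [GenFrom, dstar]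
  | cons p y ih => simp only [List.cons_append, GenFrom, ih, and_assoc]; rfl

lemma genFrom_iff (y : List (Sig × Gam)) (q : Q) :
    C.GenFrom q y ↔ ∀ k (hk : k < y.length),
      y[k].2 = C.eta (dstar C.delta q ((y.map Prod.fst).take (k + 1))) := by
  induction y generalizing q with
  | nil => simp [GenFrom]
  | cons p y ih =>
    rw [GenFrom, ih]
    refine ⟨fun ⟨h0, hy⟩ k hk => ?_, fun h => ⟨h 0 (by simp), fun k hk => h (k + 1) (by simpa)⟩⟩
    cases k with
    | zero => exact h0
    | succ k => exact hy k (by simpa using hk)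

lemma mem_prefSet_genInfC_iff (y : List (Sig × Gam)) [Nonempty Sig] :
    y ∈ prefSet (genInfC C) ↔ C.GenFrom C.init y := by
  rw [genFrom_iff]
  constructor
  · rintro ⟨w, hw, hy⟩ k hk
    have hinputs : (y.map Prod.fst).take (k + 1) = ipre (fun i => (w i).1) (k + 1) := by
      rw [hy, map_ipre, take_ipre _ (by simpa using hk)]; rfl
    rw [hinputs, (eq_ipre_length_iff y w).1 hy k hk]
    exact hw k
  · intro hy
    -- extend the inputs of `y` arbitrarily and let `C` answer them
    let a : ℕ → Sig := ((y.map Prod.fst).getD · (Classical.arbitrary Sig))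
    refine ⟨fun n => (a n, C.eta (dstar C.delta C.init (ipre a (n + 1)))), fun n => rfl, ?_⟩
    rw [eq_ipre_length_iff]
    intro i hi
    rw [ipre_getD _ _ (by simpa using hi), ← hy i hi]
    simp [a, hi]

lemma equivU_genInfC_of_dstar_eq {v1 v2 : List Sig}
    (hst : dstar C.delta C.init v1 = dstar C.delta C.init v2) :
    EquivU (genInfC C) v1 v2 := by
  intro x u1 u2 h1 h2 hm1 hm2
  have : Nonempty Sig := ⟨(hm1.choose 0).1⟩
  rw [mem_prefSet_genInfC_iff] at hm1 hm2 ⊢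
  rw [mem_prefSet_genInfC_iff, genFrom_append, genFrom_append,
    List.map_fst_zip h1.ge, List.map_fst_zip h2.ge, hst]
  exact ⟨fun h => ⟨hm2, h.2⟩, fun h => ⟨hm1, h.2⟩⟩

end ConTrans

theorem stmt_10_general {Sig Gam Q : Type}
    [Fintype Q] (C : ConTrans Sig Gam Q)
    (V : Finset (List Sig))
    (h : ∀ v1 ∈ V, ∀ v2 ∈ V, v1 ≠ v2 → ¬ EquivU (genInfC C) v1 v2) :
    V.card ≤ Fintype.card Q := by
  classical
  have hinj : Set.InjOn (dstar C.delta C.init) V := fun v1 hv1 v2 hv2 hst =>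
    by_contra fun hne => h v1 hv1 v2 hv2 hne (C.equivU_genInfC_of_dstar_eq hst)
  calc V.card = (V.image (dstar C.delta C.init)).card := (Finset.card_image_of_injOn hinj).symm
    _ ≤ Fintype.card Q := Finset.card_le_univ _

theorem stmt_10 {Sig Gam Q : Type} [Fintype Sig] [Nonempty Sig] [Fintype Gam] [Nonempty Gam]
    [Fintype Q] [Nonempty Q] (C : ConTrans Sig Gam Q)
    (V : Finset (List Sig))
    (h : ∀ v1 ∈ V, ∀ v2 ∈ V, v1 ≠ v2 → ¬ EquivU (genInfC C) v1 v2) :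
    V.card ≤ Fintype.card Q :=
  stmt_10_general C V h
end
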